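/- The van Est differentiation map VE : T•(Sym V) → Λ•V defined as VE = P ∘ j (composition of the perturbed projection of the column retract with the row inclusion) is explicitly given by VE(X₁ ⊗ ⋯ ⊗ X_k) = pr_V(X₁) ∧ ⋯ ∧ pr_V(X_k) for X₁,…,X_k ∈ Sym V; moreover VE is a morphism of differential graded algebras from (T•(Sym V), δ_ca, ⊗) to (Λ•V, 0, ∧). -/

import Mathlib

open TensorProduct

/-! ### The symmetric algebra of a module

Mathlib does not yet have the symmetric algebra, so we construct it as the
quotient of the tensor algebra by the commutativity relation. -/

/-- The relation on the tensor algebra whose quotient is the symmetric algebra. -/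
inductive SymRel (R : Type*) [CommRing R] (V : Type*) [AddCommGroup V] [Module R V] :
    TensorAlgebra R V → TensorAlgebra R V → Prop
  | mul_comm (a b : TensorAlgebra R V) : SymRel R V (a * b) (b * a)

/-- The symmetric algebra `Sym V` of an `R`-module `V`. -/
abbrev SymmAlg (R : Type*) [CommRing R] (V : Type*) [AddCommGroup V] [Module R V] : Type _ :=
  RingQuot (SymRel R V)

variable (R : Type*) [CommRing R] (V : Type*) [AddCommGroup V] [Module R V]

noncomputable instance : CommRing (SymmAlg R V) :=
  { (inferInstance : Ring (RingQuot (SymRel R V))) with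
    mul_comm := by
      intro a b
      obtain ⟨x, rfl⟩ := RingQuot.mkRingHom_surjective (SymRel R V) a
      obtain ⟨y, rfl⟩ := RingQuot.mkRingHom_surjective (SymRel R V) b
      rw [← map_mul, ← map_mul, RingQuot.mkRingHom_rel (SymRel.mul_comm x y)] }

/-- The canonical inclusion `V →ₗ Sym V` of the generators. -/
noncomputable def ιS : V →ₗ[R] SymmAlg R V :=
  (RingQuot.mkAlgHom R (SymRel R V)).toLinearMap ∘ₗ TensorAlgebra.ι R

/-! ### Tensor powers and the coalgebra differential -/

open scoped TensorProduct

section Tpow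

variable (R : Type*) [CommRing R] (S : Type*) [AddCommGroup S] [Module R S]

/-- The `k`-th tensor power `T^k S` of an `R`-module `S`. -/
abbrev Tpow (k : ℕ) : Type _ := PiTensorProduct R (fun _ : Fin k => S)

/-- Concatenation of tensor powers, `T^a S ⊗ T^b S →ₗ T^(a+b) S`:
the tensor multiplication of the tensor algebra. -/
noncomputable def concat (a b : ℕ) : Tpow R S a ⊗[R] Tpow R S b →ₗ[R] Tpow R S (a + b) :=
  (PiTensorProduct.reindex R (fun _ : Fin a ⊕ Fin b => S) finSumFinEquiv).toLinearMap ∘ₗ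
    (PiTensorProduct.tmulEquiv R S).toLinearMap

/-- The canonical identification `S ≃ T^1 S`. -/
noncomputable def toT1 : S ≃ₗ[R] Tpow R S 1 :=
  (PiTensorProduct.subsingletonEquiv (R := R) (s := fun _ : Fin 1 => S) (0 : Fin 1)).symm

/-- The canonical identification `T^(k+1) S ≃ T^k S ⊗ S` splitting off the last factor. -/
noncomputable def unsnoc (k : ℕ) : Tpow R S (k + 1) ≃ₗ[R] Tpow R S k ⊗[R] S :=
  ((PiTensorProduct.reindex R (fun _ : Fin (k + 1) => S) finSumFinEquiv.symm).trans
      (PiTensorProduct.tmulEquiv R S).symm).trans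
    (TensorProduct.congr (LinearEquiv.refl R _) (toT1 R S).symm)

/-- The canonical identification `S ⊗ S ≃ T^2 S`. -/
noncomputable def toT2 : S ⊗[R] S →ₗ[R] Tpow R S 2 :=
  concat R S 1 1 ∘ₗ TensorProduct.map (toT1 R S).toLinearMap (toT1 R S).toLinearMap

/-- The identification `T^a S ≃ T^b S` for `a = b`. -/
noncomputable def tcast {a b : ℕ} (h : a = b) : Tpow R S a ≃ₗ[R] Tpow R S b :=
  PiTensorProduct.reindex R (fun _ : Fin a => S) (finCongr h)

variable {S} in
/-- The coalgebra differential `δ_ca : T^k S → T^(k+1) S` obtained by extending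
`−Δ̄ : S → S ⊗ S ≃ T² S` (for a given reduced coproduct `Δ̄ = Db`) as a graded
derivation with respect to the tensor product, i.e.
`δ_ca = ∑_{i=1}^k (−1)^i (id^{⊗(i−1)} ⊗ Δ̄ ⊗ id^{⊗(k−i)})`, here realized through the
recursion `δ_ca(X ⊗ φ) = δ_ca(X) ⊗ φ + (−1)^k X ⊗ (−Δ̄ φ)` for `X ∈ T^k S`, `φ ∈ S`. -/
noncomputable def deltaCa (Db : S →ₗ[R] S ⊗[R] S) : (k : ℕ) → Tpow R S k →ₗ[R] Tpow R S (k + 1)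
  | 0 => 0
  | (k + 1) =>
      (concat R S (k + 1) 1 ∘ₗ TensorProduct.map (deltaCa Db k) (toT1 R S).toLinearMap
        + ((-1 : ℤ) ^ k) •
          (concat R S k 2 ∘ₗ TensorProduct.map LinearMap.id (toT2 R S ∘ₗ (-Db))))
        ∘ₗ (unsnoc R S (k + 1 - 1)).toLinearMap

end Tpow

section VE

variable {R : Type*} [CommRing R] [Algebra ℚ R] {V : Type*} [AddCommGroup V] [Module R V]

/-- The total module `⨁ₖ T^k(Sym V)` of the coalgebra complex. -/
abbrev TcaTot (R : Type*) [CommRing R] (V : Type*) [AddCommGroup V] [Module R V] :=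
  DirectSum ℕ (fun k => Tpow R (SymmAlg R V) k)

/-- The total coalgebra differential `δ_ca` on `⨁ₖ T^k(Sym V)`, for the reduced
shuffle coproduct `Db`. -/
noncomputable def deltaCaTot
    (Db : SymmAlg R V →ₗ[R] SymmAlg R V ⊗[R] SymmAlg R V) :
    TcaTot R V →ₗ[R] TcaTot R V :=
  DirectSum.toModule R ℕ _ fun k =>
    DirectSum.lof R ℕ (fun k => Tpow R (SymmAlg R V) k) (k + 1) ∘ₗ deltaCa R Db k

/-- The van Est differentiation map
`VE(X₁ ⊗ ⋯ ⊗ X_k) = pr_V(X₁) ∧ ⋯ ∧ pr_V(X_k) : T^•(Sym V) → Λ^• V`. -/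
noncomputable def vanEstMap (prV : SymmAlg R V →ₗ[R] V) :
    TcaTot R V →ₗ[R] ExteriorAlgebra R V :=
  DirectSum.toModule R ℕ _ fun k =>
    PiTensorProduct.lift
      ((MultilinearMap.mkPiAlgebraFin R k (ExteriorAlgebra R V)).compLinearMap
        fun _ => ExteriorAlgebra.ι R ∘ₗ prV)

/-- The van Est integration map
`VE⁻¹(ξ₁ ∧ ⋯ ∧ ξ_ℓ) = (1/ℓ!) ∑_σ sign(σ) ξ_(σ(1)) ⊗ ⋯ ⊗ ξ_(σ(ℓ))`. -/
noncomputable def vanEstInv : ExteriorAlgebra R V →ₗ[R] TcaTot R V :=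
  ExteriorAlgebra.liftAlternating fun ℓ =>
    (DirectSum.lof R ℕ (fun k => Tpow R (SymmAlg R V) k) ℓ).compAlternatingMap
      (algebraMap ℚ R ((ℓ.factorial : ℚ)⁻¹) •
        MultilinearMap.alternatization
          ((PiTensorProduct.tprod R).compLinearMap fun _ : Fin ℓ => ιS R V))

end VE

/-! Every summand of `δ_ca` replaces one tensor factor `φ` by `-Δ̄ φ ∈ Sym V ⊗ Sym V`, and `VE`
is multiplicative, so `VE ∘ δ_ca = 0` as soon as `a ⊗ b ↦ pr_V a ∧ pr_V b` kills every `Δ̄ φ`.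
The correction terms `1 ⊗ φ` and `φ ⊗ 1` are killed because `pr_V 1 = 0`. The coproduct `Δ` is
cocommutative, since it is so on the primitive generators of `Sym V`, while
`a ⊗ b ↦ pr_V a ∧ pr_V b` is antisymmetric; hence its value on `Δ φ` equals its own negative and
vanishes because `2` is invertible in `R`. -/

section TensorPowers

variable {R : Type*} [CommRing R] {S : Type*} [AddCommGroup S] [Module R S]

lemma concat_tprod {a b : ℕ} (x : Fin a → S) (y : Fin b → S) :
    concat R S a b (PiTensorProduct.tprod R x ⊗ₜ[R] PiTensorProduct.tprod R y)
      = PiTensorProduct.tprod R (Fin.append x y) := by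
  simp only [concat, LinearMap.coe_comp, LinearEquiv.coe_coe, Function.comp_apply,
    PiTensorProduct.tmulEquiv_apply, PiTensorProduct.reindex_tprod]
  congr 1
  funext i
  refine Fin.addCases (fun j => ?_) (fun j => ?_) i <;> simp

lemma toT1_apply (s : S) : toT1 R S s = PiTensorProduct.tprod R (fun _ : Fin 1 => s) := by
  rw [toT1, LinearEquiv.symm_apply_eq, PiTensorProduct.subsingletonEquiv_apply_tprod]

lemma deltaCa_succ_apply (Db : S →ₗ[R] S ⊗[R] S) (k : ℕ) (x : Tpow R S (k + 1)) :
    deltaCa R Db (k + 1) x =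
      concat R S (k + 1) 1 (TensorProduct.map (deltaCa R Db k) (toT1 R S).toLinearMap
          (unsnoc R S k x))
        + ((-1 : ℤ) ^ k) • concat R S k 2
          (TensorProduct.map LinearMap.id (toT2 R S ∘ₗ (-Db)) (unsnoc R S k x)) :=
  rfl

end TensorPowers

section Wedge

variable {R : Type*} [CommRing R] {S : Type*} [AddCommGroup S] [Module R S]
  {V : Type*} [AddCommGroup V] [Module R V]

noncomputable def wedgeMap (f : S →ₗ[R] V) (k : ℕ) : Tpow R S k →ₗ[R] ExteriorAlgebra R V :=
  PiTensorProduct.lift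
    ((MultilinearMap.mkPiAlgebraFin R k (ExteriorAlgebra R V)).compLinearMap
      fun _ => ExteriorAlgebra.ι R ∘ₗ f)

variable (f : S →ₗ[R] V)

lemma wedgeMap_tprod {k : ℕ} (X : Fin k → S) :
    wedgeMap f k (PiTensorProduct.tprod R X)
      = (List.ofFn fun j => ExteriorAlgebra.ι R (f (X j))).prod := by
  simp [wedgeMap, MultilinearMap.mkPiAlgebraFin_apply]

lemma wedgeMap_comp_concat (a b : ℕ) :
    wedgeMap f (a + b) ∘ₗ concat R S a b
      = LinearMap.mul' R _ ∘ₗ TensorProduct.map (wedgeMap f a) (wedgeMap f b) := by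
  ext x y
  simp [concat_tprod, wedgeMap_tprod, List.ofFn_add, Fin.append_left', Fin.append_right]

lemma wedgeMap_concat {a b : ℕ} (x : Tpow R S a) (y : Tpow R S b) :
    wedgeMap f (a + b) (concat R S a b (x ⊗ₜ[R] y)) = wedgeMap f a x * wedgeMap f b y :=
  LinearMap.congr_fun (wedgeMap_comp_concat f a b) (x ⊗ₜ[R] y)

lemma wedgeMap_toT2_tmul (a b : S) :
    wedgeMap f 2 (toT2 R S (a ⊗ₜ[R] b))
      = ExteriorAlgebra.ι R (f a) * ExteriorAlgebra.ι R (f b) := by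
  simp [toT2, wedgeMap_concat (a := 1) (b := 1), toT1_apply, wedgeMap_tprod]

lemma wedgeMap_toT2_comm (z : S ⊗[R] S) :
    wedgeMap f 2 (toT2 R S (TensorProduct.comm R S S z)) = -wedgeMap f 2 (toT2 R S z) := by
  induction z using TensorProduct.induction_on with
  | zero => simp
  | tmul a b =>
    rw [TensorProduct.comm_tmul, wedgeMap_toT2_tmul, wedgeMap_toT2_tmul]
    exact eq_neg_of_add_eq_zero_left (ExteriorAlgebra.ι_add_mul_swap _ _)
  | add z₁ z₂ h₁ h₂ => simp only [map_add, h₁, h₂, neg_add]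

lemma wedgeMap_toT2_eq_zero_of_comm_eq_self [Algebra ℚ R] {z : S ⊗[R] S}
    (hz : TensorProduct.comm R S S z = z) : wedgeMap f 2 (toT2 R S z) = 0 := by
  have hunit : IsUnit (2 : R) := by
    simpa only [map_ofNat] using (isUnit_of_invertible (2 : ℚ)).map (algebraMap ℚ R)
  have h : wedgeMap f 2 (toT2 R S z) = -wedgeMap f 2 (toT2 R S z) := by
    rw [← wedgeMap_toT2_comm, hz]
  rw [← hunit.smul_left_cancel, smul_zero, two_smul]
  nth_rewrite 2 [h]
  exact add_neg_cancel _

lemma wedgeMap_comp_deltaCa {Db : S →ₗ[R] S ⊗[R] S}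
    (hDb : wedgeMap f 2 ∘ₗ toT2 R S ∘ₗ Db = 0) (k : ℕ) :
    wedgeMap f (k + 1) ∘ₗ deltaCa R Db k = 0 := by
  induction k with
  | zero => rfl
  | succ k ih =>
    have h₁ : wedgeMap f (k + 1 + 1) ∘ₗ concat R S (k + 1) 1 ∘ₗ
        TensorProduct.map (deltaCa R Db k) (toT1 R S).toLinearMap = 0 := by
      rw [← LinearMap.comp_assoc, wedgeMap_comp_concat, LinearMap.comp_assoc,
        ← TensorProduct.map_comp, ih, TensorProduct.map_zero_left, LinearMap.comp_zero]
    have h₂ : wedgeMap f (k + 2) ∘ₗ concat R S k 2 ∘ₗ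
        TensorProduct.map LinearMap.id (toT2 R S ∘ₗ (-Db)) = 0 := by
      rw [← LinearMap.comp_assoc, wedgeMap_comp_concat, LinearMap.comp_assoc,
        ← TensorProduct.map_comp, LinearMap.comp_neg, LinearMap.comp_neg, hDb, neg_zero,
        TensorProduct.map_zero_right, LinearMap.comp_zero]
    refine LinearMap.ext fun x => ?_
    have h₁x := LinearMap.congr_fun h₁ (unsnoc R S k x)
    have h₂x := LinearMap.congr_fun h₂ (unsnoc R S k x)
    dsimp only [LinearMap.comp_apply, LinearMap.zero_apply] at h₁x h₂x ⊢
    rw [deltaCa_succ_apply, map_add, map_zsmul, h₁x, h₂x, smul_zero, add_zero]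

end Wedge

section VanEst

variable {R : Type*} [CommRing R] {V : Type*} [AddCommGroup V] [Module R V]

lemma comm_comp_eq_self_of_primitive (Δ : SymmAlg R V →ₐ[R] SymmAlg R V ⊗[R] SymmAlg R V)
    (hΔ : ∀ v : V, Δ (ιS R V v) = 1 ⊗ₜ[R] ιS R V v + ιS R V v ⊗ₜ[R] 1) :
    (Algebra.TensorProduct.comm R _ _).toAlgHom.comp Δ = Δ := by
  refine RingQuot.ringQuot_ext' R _ _ (TensorAlgebra.hom_ext (LinearMap.ext fun v => ?_))
  have hv := hΔ v
  simp only [ιS, LinearMap.coe_comp, Function.comp_apply, AlgHom.toLinearMap_apply] at hv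
  simp [hv, add_comm]

lemma wedgeMap_toT2_comp_reducedCoproduct [Algebra ℚ R]
    (Δ : SymmAlg R V →ₐ[R] SymmAlg R V ⊗[R] SymmAlg R V)
    (hΔ : ∀ v : V, Δ (ιS R V v) = 1 ⊗ₜ[R] ιS R V v + ιS R V v ⊗ₜ[R] 1)
    (prV : SymmAlg R V →ₗ[R] V) (hprV : prV 1 = 0) :
    wedgeMap prV 2 ∘ₗ toT2 R (SymmAlg R V) ∘ₗ (Δ.toLinearMap
      - (TensorProduct.mk R (SymmAlg R V) (SymmAlg R V) 1
        + (TensorProduct.mk R (SymmAlg R V) (SymmAlg R V)).flip 1)) = 0 := by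
  refine LinearMap.ext fun φ => ?_
  have hcomm : TensorProduct.comm R _ _ (Δ φ) = Δ φ := by
    rw [← Algebra.TensorProduct.comm_toLinearEquiv]
    exact DFunLike.congr_fun (comm_comp_eq_self_of_primitive Δ hΔ) φ
  simp [wedgeMap_toT2_tmul, hprV, wedgeMap_toT2_eq_zero_of_comm_eq_self prV hcomm]

lemma vanEstMap_lof (prV : SymmAlg R V →ₗ[R] V) (k : ℕ) (x : Tpow R (SymmAlg R V) k) :
    vanEstMap prV (DirectSum.lof R ℕ (fun k => Tpow R (SymmAlg R V) k) k x)
      = wedgeMap prV k x :=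
  DirectSum.toModule_lof R k x

lemma vanEstMap_comp_deltaCaTot (prV : SymmAlg R V →ₗ[R] V)
    {Db : SymmAlg R V →ₗ[R] SymmAlg R V ⊗[R] SymmAlg R V}
    (hDb : wedgeMap prV 2 ∘ₗ toT2 R (SymmAlg R V) ∘ₗ Db = 0) :
    vanEstMap prV ∘ₗ deltaCaTot Db = 0 := by
  refine DirectSum.linearMap_ext R fun k => LinearMap.ext fun x => ?_
  simp only [LinearMap.comp_apply, deltaCaTot, DirectSum.toModule_lof, vanEstMap_lof]
  exact LinearMap.congr_fun (wedgeMap_comp_deltaCa prV hDb k) x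

end VanEst

theorem vanEst_differentiation_general
    {R : Type*} [CommRing R] [Algebra ℚ R]
    {V : Type*} [AddCommGroup V] [Module R V]
    (Δ : SymmAlg R V →ₐ[R] SymmAlg R V ⊗[R] SymmAlg R V)
    (hΔ : ∀ v : V, Δ (ιS R V v) = 1 ⊗ₜ[R] ιS R V v + ιS R V v ⊗ₜ[R] 1)
    (prV : SymmAlg R V →ₗ[R] V)
    (hprV0 : ∀ (s : ℕ) (x : Fin s → V), s ≠ 1 → prV (∏ j, ιS R V (x j)) = 0)
    (Db : SymmAlg R V →ₗ[R] SymmAlg R V ⊗[R] SymmAlg R V)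
    (hDb : Db = Δ.toLinearMap
      - (TensorProduct.mk R (SymmAlg R V) (SymmAlg R V) 1
        + (TensorProduct.mk R (SymmAlg R V) (SymmAlg R V)).flip 1)) :
    -- the explicit formula
    (∀ (k : ℕ) (X : Fin k → SymmAlg R V),
      vanEstMap prV
          (DirectSum.lof R ℕ (fun k => Tpow R (SymmAlg R V) k) k (PiTensorProduct.tprod R X))
        = (List.ofFn fun j => ExteriorAlgebra.ι R (prV (X j))).prod) ∧
    -- chain map into `(Λ^• V, 0)`
    (∀ x : TcaTot R V, vanEstMap prV (deltaCaTot Db x) = 0) ∧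
    -- multiplicative
    (∀ (k l : ℕ) (x : Tpow R (SymmAlg R V) k) (y : Tpow R (SymmAlg R V) l),
      vanEstMap prV
          (DirectSum.lof R ℕ (fun k => Tpow R (SymmAlg R V) k) (k + l)
            (concat R (SymmAlg R V) k l (x ⊗ₜ[R] y)))
        = vanEstMap prV (DirectSum.lof R ℕ (fun k => Tpow R (SymmAlg R V) k) k x)
          * vanEstMap prV (DirectSum.lof R ℕ (fun k => Tpow R (SymmAlg R V) k) l y)) ∧
    -- unital
    (vanEstMap prV
        (DirectSum.lof R ℕ (fun k => Tpow R (SymmAlg R V) k) 0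
          ((PiTensorProduct.isEmptyEquiv (Fin 0)).symm (1 : R)))
      = 1) := by
  have hprV_one : prV 1 = 0 := by simpa using hprV0 0 Fin.elim0 zero_ne_one
  have hchain : vanEstMap prV ∘ₗ deltaCaTot Db = 0 := vanEstMap_comp_deltaCaTot prV
    (hDb ▸ wedgeMap_toT2_comp_reducedCoproduct Δ hΔ prV hprV_one)
  refine ⟨fun k X => ?_, LinearMap.congr_fun hchain, fun k l x y => ?_, ?_⟩
  · rw [vanEstMap_lof, wedgeMap_tprod]
  · rw [vanEstMap_lof, vanEstMap_lof, vanEstMap_lof, wedgeMap_concat]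
  · rw [vanEstMap_lof, PiTensorProduct.isEmptyEquiv_symm_apply, map_smul, wedgeMap_tprod]
    simp

/-- **The van Est differentiation map.**
The map `VE : T^•(Sym V) → Λ^• V`, `VE(X₁ ⊗ ⋯ ⊗ X_k) = pr_V(X₁) ∧ ⋯ ∧ pr_V(X_k)`,
is a morphism of differential graded algebras from `(T^•(Sym V), δ_ca, ⊗)` to
`(Λ^• V, 0, ∧)`: it annihilates `δ_ca`-images (chain map to the zero differential),
is multiplicative for the concatenation product, and unital. -/
theorem vanEst_differentiation
    {R : Type*} [CommRing R] [Algebra ℚ R]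
    {V : Type*} [AddCommGroup V] [Module R V]
    (Δ : SymmAlg R V →ₐ[R] SymmAlg R V ⊗[R] SymmAlg R V)
    (hΔ : ∀ v : V, Δ (ιS R V v) = 1 ⊗ₜ[R] ιS R V v + ιS R V v ⊗ₜ[R] 1)
    (prV : SymmAlg R V →ₗ[R] V)
    (hprV1 : ∀ v : V, prV (ιS R V v) = v)
    (hprV0 : ∀ (s : ℕ) (x : Fin s → V), s ≠ 1 → prV (∏ j, ιS R V (x j)) = 0)
    (Db : SymmAlg R V →ₗ[R] SymmAlg R V ⊗[R] SymmAlg R V)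
    (hDb : Db = Δ.toLinearMap
      - (TensorProduct.mk R (SymmAlg R V) (SymmAlg R V) 1
        + (TensorProduct.mk R (SymmAlg R V) (SymmAlg R V)).flip 1)) :
    -- the explicit formula
    (∀ (k : ℕ) (X : Fin k → SymmAlg R V),
      vanEstMap prV
          (DirectSum.lof R ℕ (fun k => Tpow R (SymmAlg R V) k) k (PiTensorProduct.tprod R X))
        = (List.ofFn fun j => ExteriorAlgebra.ι R (prV (X j))).prod) ∧
    -- chain map into `(Λ^• V, 0)`
    (∀ x : TcaTot R V, vanEstMap prV (deltaCaTot Db x) = 0) ∧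
    -- multiplicative
    (∀ (k l : ℕ) (x : Tpow R (SymmAlg R V) k) (y : Tpow R (SymmAlg R V) l),
      vanEstMap prV
          (DirectSum.lof R ℕ (fun k => Tpow R (SymmAlg R V) k) (k + l)
            (concat R (SymmAlg R V) k l (x ⊗ₜ[R] y)))
        = vanEstMap prV (DirectSum.lof R ℕ (fun k => Tpow R (SymmAlg R V) k) k x)
          * vanEstMap prV (DirectSum.lof R ℕ (fun k => Tpow R (SymmAlg R V) k) l y)) ∧
    -- unital
    (vanEstMap prV
        (DirectSum.lof R ℕ (fun k => Tpow R (SymmAlg R V) k) 0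
          ((PiTensorProduct.isEmptyEquiv (Fin 0)).symm (1 : R)))
      = 1) :=
  vanEst_differentiation_general Δ hΔ prV hprV0 Db hDb
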